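/- For natural numbers $w \geq d \geq 0$, one has $\sum_{j=0}^{d} \binom{w}{j}\binom{w + d - 2j}{d - j} \leq \frac{2^d (w+1)^d}{d!}$, with the right-hand side interpreted as a rational number. -/

import Mathlib

/-!
Multiplying by `d!`, the `j`-th summand becomes `C(d, j) · w^(j) · (w + d - 2j)^(d - j)` (falling
factorials). By AM-GM over all `d` factors, the `j` factors of the first falling factorial measured
against `B = w - d/2 + 3/2` and the `d - j` factors of the second against `A = w + d/2 + 1/2`, the
product of the two falling factorials is at most `B^j A^(d-j)`. Since `A + B = 2(w + 1)`, the binomial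
theorem then bounds the whole sum by `(2(w + 1))^d`.
-/

open Finset
open scoped Nat

namespace Real

theorem prod_le_one_of_sum_le_card {ι : Type*} (s : Finset ι) {f : ι → ℝ}
    (hf : ∀ i ∈ s, 0 ≤ f i) (h : ∑ i ∈ s, f i ≤ #s) : ∏ i ∈ s, f i ≤ 1 := by
  rcases s.eq_empty_or_nonempty with rfl | hs
  · simp
  have hcard : (0 : ℝ) < #s := by exact_mod_cast hs.card_pos
  have amgm := geom_mean_le_arith_mean s (fun _ => 1) f (by simp) (by simpa using hcard) hf
  simp only [rpow_one, one_mul, sum_const, nsmul_eq_mul, mul_one] at amgm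
  have hle : (∏ i ∈ s, f i) ^ (#s : ℝ)⁻¹ ≤ 1 := amgm.trans ((div_le_one hcard).mpr h)
  rwa [rpow_inv_le_iff_of_pos (prod_nonneg hf) zero_le_one hcard, one_rpow] at hle

theorem prod_mul_prod_le_pow_mul_pow {ι κ : Type*} (s : Finset ι) (t : Finset κ) {x : ι → ℝ}
    {y : κ → ℝ} {a b : ℝ} (ha : 0 < a) (hb : 0 < b) (hx : ∀ i ∈ s, 0 ≤ x i)
    (hy : ∀ i ∈ t, 0 ≤ y i) (h : (∑ i ∈ s, x i) / a + (∑ i ∈ t, y i) / b ≤ #s + #t) :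
    (∏ i ∈ s, x i) * (∏ i ∈ t, y i) ≤ a ^ #s * b ^ #t := by
  have key := prod_le_one_of_sum_le_card (s.disjSum t)
    (f := Sum.elim (fun i => x i / a) (fun i => y i / b))
    (by rintro (i | i) hi
        exacts [div_nonneg (hx i (inl_mem_disjSum.mp hi)) ha.le,
          div_nonneg (hy i (inr_mem_disjSum.mp hi)) hb.le])
    (by simpa [sum_disjSum, ← sum_div] using h)
  simp only [prod_disjSum, Sum.elim_inl, Sum.elim_inr, prod_div_distrib, prod_const] at key
  rwa [div_mul_div_comm, div_le_one (by positivity)] at key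

end Real

theorem Nat.cast_descFactorial_eq_prod_range {R : Type*} [CommRing R] {n k : ℕ} (h : k ≤ n) :
    (n.descFactorial k : R) = ∏ i ∈ range k, ((n : R) - i) := by
  rw [descFactorial_eq_prod_range, Nat.cast_prod]
  exact prod_congr rfl fun i hi => Nat.cast_sub (by grind)

theorem sum_range_sub_natCast (c : ℝ) (n : ℕ) :
    ∑ i ∈ range n, (c - i) = n * c - n * (n - 1) / 2 := by
  induction n with
  | zero => simp
  | succ n ih => rw [sum_range_succ, ih]; push_cast; ring

theorem descFactorial_mul_descFactorial_le {w d j : ℕ} (hjd : j ≤ d) (hdw : d ≤ w) :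
    (w.descFactorial j : ℝ) * ((w + d - 2 * j).descFactorial (d - j) : ℝ)
      ≤ ((2 * w - d + 3) / 2) ^ j * ((2 * w + d + 1) / 2) ^ (d - j) := by
  obtain ⟨k, rfl⟩ := exists_add_of_le hjd
  have hjw : j ≤ w := by omega
  have hkw : k ≤ w + k - j := by omega
  rw [Nat.add_sub_cancel_left, show w + (j + k) - 2 * j = w + k - j by omega,
    Nat.cast_descFactorial_eq_prod_range hjw, Nat.cast_descFactorial_eq_prod_range hkw,
    Nat.cast_sub (by omega)]
  have hw : (j : ℝ) + k ≤ w := by exact_mod_cast hdw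
  have hj : (0 : ℝ) ≤ j := j.cast_nonneg
  have hk : (0 : ℝ) ≤ k := k.cast_nonneg
  have hB : (0 : ℝ) < (2 * w - (j + k) + 3) / 2 := by linarith
  have hA : (0 : ℝ) < (2 * w + (j + k) + 1) / 2 := by linarith
  push_cast
  simpa using Real.prod_mul_prod_le_pow_mul_pow (range j) (range k) hB hA
    (fun i hi => sub_nonneg.mpr (by exact_mod_cast (by grind : i ≤ w)))
    (fun i hi => sub_nonneg.mpr (by
      have : (i : ℝ) + 1 ≤ k := by exact_mod_cast mem_range.mp hi
      linarith))
    (by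
      rw [sum_range_sub_natCast, sum_range_sub_natCast, card_range, card_range,
        div_add_div _ _ hB.ne' hA.ne', div_le_iff₀ (mul_pos hB hA)]
      -- clearing denominators leaves `j * ((k - 2) A - 3 k B) ≤ 0`, and `w ≥ j + k` gives `A ≤ 3B`
      nlinarith [mul_nonneg hj (mul_nonneg hk (sub_nonneg.mpr hw)), mul_nonneg hj hk,
        mul_nonneg hj (sub_nonneg.mpr hw), mul_nonneg hj hj])

theorem sum_choose_mul_choose_mul_factorial_le {w d : ℕ} (hdw : d ≤ w) :
    (∑ j ∈ range (d + 1), w.choose j * (w + d - 2 * j).choose (d - j)) * d !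
      ≤ 2 ^ d * (w + 1) ^ d := by
  have hterm : ∀ j ∈ range (d + 1), w.choose j * (w + d - 2 * j).choose (d - j) * d !
      = d.choose j * (w.descFactorial j * (w + d - 2 * j).descFactorial (d - j)) := by
    intro j hj
    rw [Nat.descFactorial_eq_factorial_mul_choose, Nat.descFactorial_eq_factorial_mul_choose,
      ← Nat.choose_mul_factorial_mul_factorial (mem_range_succ_iff.mp hj)]
    ring
  rw [sum_mul, sum_congr rfl hterm, ← Nat.cast_le (α := ℝ)]
  push_cast
  calc ∑ j ∈ range (d + 1), (d.choose j : ℝ)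
        * ((w.descFactorial j : ℝ) * ((w + d - 2 * j).descFactorial (d - j) : ℝ))
      ≤ ∑ j ∈ range (d + 1),
          ((2 * w - d + 3) / 2 : ℝ) ^ j * ((2 * w + d + 1) / 2) ^ (d - j) * d.choose j := by
        refine sum_le_sum fun j hj => ?_
        rw [mul_comm]
        exact mul_le_mul_of_nonneg_right
          (descFactorial_mul_descFactorial_le (mem_range_succ_iff.mp hj) hdw) (by positivity)
    _ = ((2 * w - d + 3) / 2 + (2 * w + d + 1) / 2) ^ d := (add_pow _ _ _).symm
    _ = 2 ^ d * (w + 1) ^ d := by rw [← mul_pow]; ring_nf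

theorem stmt_7 (w d : ℕ) (hdw : d ≤ w) :
    ((∑ j ∈ Finset.range (d + 1),
        Nat.choose w j * Nat.choose (w + d - 2 * j) (d - j) : ℕ) : ℚ)
      ≤ 2 ^ d * ((w : ℚ) + 1) ^ d / (Nat.factorial d : ℚ) := by
  rw [le_div_iff₀ (by positivity)]
  exact_mod_cast sum_choose_mul_choose_mul_factorial_le hdw
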